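/- arXiv:2102.09338 — 7 statements merged into one kernel-verified Lean document; each statement's English description precedes it below -/
import Mathlib

section
/- For every G-clock constraint φ (a clock constraint all of whose atomic constraints have bounds at most k(x) for each clock x, where k : C → ℕ is the clock ceiling), the negation ¬φ is logically equivalent to a G-clock constraint: there exists a G-clock constraint ψ such that for all valuations u, u ⊨ ψ ↔ ¬(u ⊨ φ). -/
inductive CC (C : Type) : Type where
  | lt (x : C) (n : ℕ)
  | eq (x : C) (n : ℕ)
  | gt (x : C) (n : ℕ)
  | dlt (x y : C) (n : ℕ)
  | deq (x y : C) (n : ℕ)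
  | dgt (x y : C) (n : ℕ)
  | and (φ ψ : CC C)
  | or (φ ψ : CC C)

/-- Satisfaction of a clock constraint by a clock valuation `u : C → ℝ≥0`. -/
def sat {C : Type} (u : C → NNReal) : CC C → Prop
  | .lt x n => (u x : ℝ) < n
  | .eq x n => (u x : ℝ) = n
  | .gt x n => (u x : ℝ) > n
  | .dlt x y n => (u x : ℝ) - (u y : ℝ) < n
  | .deq x y n => (u x : ℝ) - (u y : ℝ) = n
  | .dgt x y n => (u x : ℝ) - (u y : ℝ) > n
  | .and φ ψ => sat u φ ∧ sat u ψ
  | .or φ ψ => sat u φ ∨ sat u ψ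

/-- `shift u δ` increases every clock by `δ`. -/
def shift {C : Type} (u : C → NNReal) (δ : NNReal) : C → NNReal := fun x => u x + δ

open Classical in
/-- `resetVal u r` maps clocks in `r` to `0` and agrees with `u` elsewhere. -/
noncomputable def resetVal {C : Type} (u : C → NNReal) (r : Set C) : C → NNReal :=
  fun x => if x ∈ r then 0 else u x

/-- `Bounded k φ`: all bounds in atomic constraints are at most the clock ceilings,
i.e. `φ` is a `G`-clock constraint. -/
def Bounded {C : Type} (k : C → ℕ) : CC C → Prop
  | .lt x n => n ≤ k x
  | .eq x n => n ≤ k x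
  | .gt x n => n ≤ k x
  | .dlt x _ n => n ≤ k x
  | .deq x _ n => n ≤ k x
  | .dgt x _ n => n ≤ k x
  | .and φ ψ => Bounded k φ ∧ Bounded k ψ
  | .or φ ψ => Bounded k φ ∧ Bounded k ψ

section Order

variable {α : Type*} [LinearOrder α] {a b : α}

theorem eq_or_gt_iff_not_lt : a = b ∨ a > b ↔ ¬ a < b := by
  rw [not_lt, le_iff_eq_or_lt, eq_comm]

theorem lt_or_eq_iff_not_gt : a < b ∨ a = b ↔ ¬ a > b := by
  rw [not_lt, le_iff_lt_or_eq]

end Order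

namespace CC

variable {C : Type}

/-- Negation pushed to the atoms: by trichotomy an atom is negated by the disjunction of the other
two relations with the same bound, so no new bounds appear. -/
def neg : CC C → CC C
  | .lt x n => .or (.eq x n) (.gt x n)
  | .eq x n => .or (.lt x n) (.gt x n)
  | .gt x n => .or (.lt x n) (.eq x n)
  | .dlt x y n => .or (.deq x y n) (.dgt x y n)
  | .deq x y n => .or (.dlt x y n) (.dgt x y n)
  | .dgt x y n => .or (.dlt x y n) (.deq x y n)
  | .and φ ψ => .or φ.neg ψ.neg
  | .or φ ψ => .and φ.neg ψ.neg

theorem bounded_neg {k : C → ℕ} {φ : CC C} (hφ : Bounded k φ) : Bounded k φ.neg := by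
  induction φ with
  | and φ ψ ihφ ihψ | or φ ψ ihφ ihψ => exact ⟨ihφ hφ.1, ihψ hφ.2⟩
  | _ => exact ⟨hφ, hφ⟩

theorem sat_neg (u : C → NNReal) (φ : CC C) : sat u φ.neg ↔ ¬ sat u φ := by
  induction φ with
  | lt | dlt => exact eq_or_gt_iff_not_lt
  | eq | deq => exact lt_or_lt_iff_ne
  | gt | dgt => exact lt_or_eq_iff_not_gt
  | and φ ψ ihφ ihψ => simp only [neg, sat, ihφ, ihψ, not_and_or]
  | or φ ψ ihφ ihψ => simp only [neg, sat, ihφ, ihψ, not_or]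

end CC

theorem neg_equiv_GclockConstraint_general {C : Type} (k : C → ℕ) (φ : CC C)
    (hφ : Bounded k φ) :
    ∃ ψ : CC C, Bounded k ψ ∧ ∀ u : C → NNReal, sat u ψ ↔ ¬ sat u φ :=
  ⟨φ.neg, CC.bounded_neg hφ, fun u => CC.sat_neg u φ⟩

/-- The negation of a G-clock constraint is logically equivalent to a G-clock constraint. -/
theorem neg_equiv_GclockConstraint {C : Type} [Fintype C] (k : C → ℕ) (φ : CC C)
    (hφ : Bounded k φ) :
    ∃ ψ : CC C, Bounded k ψ ∧ ∀ u : C → NNReal, sat u ψ ↔ ¬ sat u φ :=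
  neg_equiv_GclockConstraint_general k φ hφ
end

section
/- For every G-clock constraint φ and every reset set r ⊆ C, the formula φ[r] obtained by substituting 0 for every clock in r is logically equivalent to a G-clock constraint: there exists a G-clock constraint ψ such that for all valuations u, u ⊨ φ[r] ↔ u ⊨ ψ, where u ⊨ φ[r] means u[r] ⊨ φ and u[r] is the valuation mapping clocks in r to 0 and agreeing with u elsewhere. -/
/-!
Substituting `0` for the reset clocks can be done syntactically, atom by atom, without raising any
bound: an atom over reset clocks only becomes a truth constant, and `x - y ∼ n` with exactly one of
`x`, `y` reset becomes an atom on the other clock or, since clocks are nonnegative, a combination of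
a truth constant with `y > 0` or `y = 0`.
-/

theorem NNReal.neg_coe_lt_natCast_iff (a : NNReal) (n : ℕ) : -(a : ℝ) < n ↔ 0 < n ∨ 0 < a := by
  rw [neg_lt_iff_pos_add, ← NNReal.coe_natCast, ← NNReal.coe_add, NNReal.coe_pos, add_pos_iff,
    Nat.cast_pos, or_comm]

theorem NNReal.neg_coe_eq_natCast_iff (a : NNReal) (n : ℕ) : -(a : ℝ) = n ↔ n = 0 ∧ a = 0 := by
  rw [neg_eq_iff_add_eq_zero, ← NNReal.coe_natCast, ← NNReal.coe_add, NNReal.coe_eq_zero,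
    add_eq_zero, Nat.cast_eq_zero, and_comm]

theorem NNReal.neg_coe_le_natCast (a : NNReal) (n : ℕ) : -(a : ℝ) ≤ n :=
  (neg_nonpos.mpr a.coe_nonneg).trans n.cast_nonneg

namespace CC

variable {C : Type}

/-- The language has no truth constants; `x - x = 0` and `x - x > 0` serve as `true` and `false`. -/
def const (p : Prop) [Decidable p] (x : C) : CC C :=
  if p then deq x x 0 else dgt x x 0

theorem sat_const (p : Prop) [Decidable p] (x : C) (u : C → NNReal) : sat u (const p x) ↔ p := by
  unfold const
  split_ifs with hp <;> simp [sat, hp]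

theorem bounded_const (k : C → ℕ) (p : Prop) [Decidable p] (x : C) : Bounded k (const p x) := by
  unfold const
  split_ifs <;> exact Nat.zero_le _

def reset (r : Set C) [DecidablePred (· ∈ r)] : CC C → CC C
  | lt x n => if x ∈ r then const (0 < n) x else lt x n
  | eq x n => if x ∈ r then const (n = 0) x else eq x n
  | gt x n => if x ∈ r then const False x else gt x n
  | dlt x y n =>
    if x ∈ r then (if y ∈ r then const (0 < n) x else or (const (0 < n) x) (gt y 0))
    else if y ∈ r then lt x n else dlt x y n
  | deq x y n =>
    if x ∈ r then (if y ∈ r then const (n = 0) x else and (const (n = 0) x) (eq y 0))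
    else if y ∈ r then eq x n else deq x y n
  | dgt x y n =>
    if x ∈ r then const False x
    else if y ∈ r then gt x n else dgt x y n
  | and φ ψ => and (reset r φ) (reset r ψ)
  | or φ ψ => or (reset r φ) (reset r ψ)

theorem bounded_reset (k : C → ℕ) (r : Set C) [DecidablePred (· ∈ r)] {φ : CC C}
    (hφ : Bounded k φ) : Bounded k (reset r φ) := by
  induction φ with
  | and φ ψ ihφ ihψ | or φ ψ ihφ ihψ => exact ⟨ihφ hφ.1, ihψ hφ.2⟩
  | _ =>
    simp only [reset]
    split_ifs <;>
      first | exact hφ | exact bounded_const k _ _ | exact ⟨bounded_const k _ _, Nat.zero_le _⟩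

theorem sat_reset (r : Set C) [DecidablePred (· ∈ r)] (φ : CC C) (u : C → NNReal) :
    sat u (reset r φ) ↔ sat (resetVal u r) φ := by
  induction φ with
  | and φ ψ ihφ ihψ | or φ ψ ihφ ihψ => simp only [reset, sat, ihφ, ihψ]
  | _ =>
    simp only [reset, sat, resetVal]
    split_ifs <;> simp [sat, sat_const, @eq_comm ℝ 0, NNReal.neg_coe_lt_natCast_iff,
      NNReal.neg_coe_eq_natCast_iff, NNReal.neg_coe_le_natCast]

end CC

theorem reset_equiv_GclockConstraint_general {C : Type} (k : C → ℕ) (φ : CC C)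
    (hφ : Bounded k φ) (r : Set C) :
    ∃ ψ : CC C, Bounded k ψ ∧ ∀ u : C → NNReal, sat (resetVal u r) φ ↔ sat u ψ := by
  classical
  exact ⟨φ.reset r, CC.bounded_reset k r hφ, fun u => (CC.sat_reset r φ u).symm⟩

/-- The reset update of a G-clock constraint is logically equivalent to a G-clock constraint. -/
theorem reset_equiv_GclockConstraint {C : Type} [Fintype C] (k : C → ℕ) (φ : CC C)
    (hφ : Bounded k φ) (r : Set C) :
    ∃ ψ : CC C, Bounded k ψ ∧ ∀ u : C → NNReal, sat (resetVal u r) φ ↔ sat u ψ :=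
  reset_equiv_GclockConstraint_general k φ hφ r
end

section
/- Time-successor mimicking between region-equivalent valuations: if u₁ and u₂ lie in the same extended clock region, and u₁ + Δ₁ lies in region r for some Δ₁ ∈ ℝ≥0, then there exists Δ₂ ∈ ℝ≥0 such that u₂ + Δ₂ lies in region r. -/
/-- Two valuations lie in the same extended clock region: each clock's value compares
identically with every integer up to its ceiling, and each difference of two distinct
clocks compares identically with every relevant integer. -/
def RegionEquiv {C : Type} (k : C → ℕ) (u₁ u₂ : C → NNReal) : Prop :=
  (∀ x : C, ∀ n : ℕ, n ≤ k x →
    (((u₁ x : ℝ) < n) ↔ ((u₂ x : ℝ) < n)) ∧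
    (((u₁ x : ℝ) = n) ↔ ((u₂ x : ℝ) = n)) ∧
    (((u₁ x : ℝ) > n) ↔ ((u₂ x : ℝ) > n))) ∧
  (∀ x y : C, x ≠ y → ∀ m : ℤ, -(k x : ℤ) ≤ m → m ≤ (k y : ℤ) →
    (((u₁ y : ℝ) - (u₁ x : ℝ) < (m : ℝ)) ↔ ((u₂ y : ℝ) - (u₂ x : ℝ) < (m : ℝ))) ∧
    (((u₁ y : ℝ) - (u₁ x : ℝ) = (m : ℝ)) ↔ ((u₂ y : ℝ) - (u₂ x : ℝ) = (m : ℝ))) ∧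
    (((u₁ y : ℝ) - (u₁ x : ℝ) > (m : ℝ)) ↔ ((u₂ y : ℝ) - (u₂ x : ℝ) > (m : ℝ))))

theorem cmp_eq_cmp_iff {α β : Type*} [LinearOrder α] [LinearOrder β] {x y : α} {x' y' : β} :
    cmp x y = cmp x' y' ↔ (x < y ↔ x' < y') ∧ (x = y ↔ x' = y') ∧ (x > y ↔ x' > y') := by
  refine ⟨fun h => ⟨lt_iff_lt_of_cmp_eq_cmp h, eq_iff_eq_of_cmp_eq_cmp h,
    lt_iff_lt_of_cmp_eq_cmp (cmp_eq_cmp_symm.1 h)⟩, fun ⟨hlt, heq, hgt⟩ => ?_⟩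
  rcases lt_trichotomy x y with hxy | hxy | hxy
  · rw [hxy.cmp_eq_lt, (hlt.1 hxy).cmp_eq_lt]
  · rw [hxy.cmp_eq_eq, (heq.1 hxy).cmp_eq_eq]
  · rw [hxy.cmp_eq_gt, (hgt.1 hxy).cmp_eq_gt]

section OrderedAddCommGroup

variable {G : Type*} [AddCommGroup G] [LinearOrder G] [IsOrderedAddMonoid G]

theorem cmp_sub_sub (a b c d : G) : cmp (a - b) (c - d) = cmp (d - b) (c - a) := by
  rw [← cmp_add_right (a - b) (c - d) (d - a)]
  congr 1 <;> abel

theorem cmp_zero_sub (a b : G) : cmp 0 (a - b) = cmp b a := by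
  rw [← cmp_add_right 0 (a - b) b, zero_add, sub_add_cancel]

theorem cmp_sub_left_eq_cmp_add (a b c : G) : cmp (a - b) c = cmp a (b + c) := by
  rw [← cmp_add_right (a - b) c b, sub_add_cancel, add_comm]

end OrderedAddCommGroup

theorem exists_forall_cmp_eq_cmp {ι α β : Type*} [Finite ι] [LinearOrder α] [LinearOrder β]
    [DenselyOrdered β] [NoMinOrder β] [NoMaxOrder β] [Nonempty β] (p : ι → α) (q : ι → β)
    (h : ∀ i j, cmp (p i) (p j) = cmp (q i) (q j)) (a : α) :
    ∃ b : β, ∀ i, cmp (p i) a = cmp (q i) b := by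
  classical
  have := Fintype.ofFinite ι
  let f : Order.PartialIso α β :=
    ⟨Finset.univ.image fun i => (p i, q i), by
      simp only [Finset.mem_image]
      rintro _ ⟨i, -, rfl⟩ _ ⟨j, -, rfl⟩
      exact h i j⟩
  obtain ⟨b, hb⟩ := f.exists_across a
  exact ⟨b, fun i => hb _ (Finset.mem_image_of_mem _ (Finset.mem_univ i))⟩

section Regions

variable {C : Type} {k : C → ℕ} {u₁ u₂ : C → NNReal}

theorem coe_shift_sub_coe_shift (u : C → NNReal) (δ : NNReal) (x y : C) :
    (shift u δ y : ℝ) - shift u δ x = (u y : ℝ) - u x := by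
  simp only [shift, NNReal.coe_add]
  ring

def thresholdDelay (k : C → ℕ) (u : C → NNReal) : Option (Σ x : C, Fin (k x + 1)) → ℝ
  | none => 0
  | some ⟨x, n⟩ => (n : ℝ) - u x

theorem RegionEquiv.cmp_thresholdDelay (h : RegionEquiv k u₁ u₂) (i j) :
    cmp (thresholdDelay k u₁ i) (thresholdDelay k u₁ j) = cmp (thresholdDelay k u₂ i) (thresholdDelay k u₂ j) := by
  have clock : ∀ x (n : Fin (k x + 1)), cmp 0 ((n : ℝ) - u₁ x) = cmp 0 ((n : ℝ) - u₂ x) :=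
    fun x n => by
      rw [cmp_zero_sub, cmp_zero_sub]
      exact cmp_eq_cmp_iff.2 (h.1 x n (Nat.le_of_lt_succ n.2))
  rcases i with _ | ⟨x, n⟩ <;> rcases j with _ | ⟨y, m⟩
  · rfl
  · exact clock y m
  · exact cmp_eq_cmp_symm.1 (clock x n)
  · simp only [thresholdDelay]
    rw [cmp_sub_sub _ (u₁ x : ℝ), cmp_sub_sub _ (u₂ x : ℝ)]
    by_cases hxy : x = y
    · subst hxy
      simp
    · have hm : (((m : ℤ) - n : ℤ) : ℝ) = (m : ℝ) - n := by push_cast; rfl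
      have := h.2 x y hxy ((m : ℤ) - n) (by omega) (by omega)
      rw [hm] at this
      exact cmp_eq_cmp_iff.2 this

theorem RegionEquiv.shift_of_cmp (h : RegionEquiv k u₁ u₂) {Δ₁ Δ₂ : NNReal}
    (hΔ : ∀ x (n : ℕ), n ≤ k x → cmp ((n : ℝ) - u₁ x) Δ₁ = cmp ((n : ℝ) - u₂ x) Δ₂) :
    RegionEquiv k (shift u₁ Δ₁) (shift u₂ Δ₂) := by
  refine ⟨fun x n hn => cmp_eq_cmp_iff.1 ?_, fun x y hxy m hm hm' => ?_⟩
  · have := hΔ x n hn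
    rw [cmp_sub_left_eq_cmp_add, cmp_sub_left_eq_cmp_add, cmp_eq_cmp_symm] at this
    simpa only [shift, NNReal.coe_add] using this
  · simpa only [coe_shift_sub_coe_shift] using h.2 x y hxy m hm hm'

end Regions

/-- Time-successor mimicking: if u₁ and u₂ are region-equivalent and u₁ + Δ₁ lies in some
region, then some time successor u₂ + Δ₂ of u₂ lies in the same region. -/
theorem regionEquiv_time_successor {C : Type} [Fintype C] (k : C → ℕ)
    (u₁ u₂ : C → NNReal) (h : RegionEquiv k u₁ u₂) (Δ₁ : NNReal) :
    ∃ Δ₂ : NNReal, RegionEquiv k (shift u₁ Δ₁) (shift u₂ Δ₂) := by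
  obtain ⟨Δ, hΔ⟩ := exists_forall_cmp_eq_cmp _ _ h.cmp_thresholdDelay (Δ₁ : ℝ)
  have hΔ₀ : 0 ≤ Δ := (le_iff_le_of_cmp_eq_cmp (hΔ none)).1 Δ₁.2
  refine ⟨Δ.toNNReal, h.shift_of_cmp fun x n hn => ?_⟩
  rw [Real.coe_toNNReal Δ hΔ₀]
  exact hΔ (some ⟨x, n, Nat.lt_succ_of_le hn⟩)
end

section
/- Δ-time invariance: for G-clock constraints φ₁ and φ₂, the predicate Φ(u) := ∃Δ ∈ ℝ≥0, (u+Δ ⊨ φ₁) ∧ ∀δ ∈ [0,Δ], (u+δ ⊨ φ₂) is invariant under extended-region equivalence: if u₁ and u₂ lie in the same extended clock region, then Φ(u₁) ↔ Φ(u₂). -/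
/-!
Region equivalence of `u₁` and `u₂` forces the finitely many event times
`n - uᵢ x` (`n ≤ k x`), together with `0`, to be ordered in the same way for `i = 1, 2`. Since
`ℝ` is dense without endpoints, any delay `Δ` for `u₁` has a partner `Δ'` for `u₂` occupying
the same position among these event times, and then `u₁ + Δ` and `u₂ + Δ'` are again region
equivalent. Applied once more to the event times enlarged by `Δ'`, every `δ' ≤ Δ'` has a partner
`δ ≤ Δ`, which transports the invariant `φ₂` on `[0, Δ]` to `[0, Δ']`.
-/

section SameOrder

variable {ι α β : Type*}

def SameOrder [LE α] [LE β] (f : ι → α) (g : ι → β) : Prop :=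
  ∀ i j, f i ≤ f j ↔ g i ≤ g j

/-- `a` and `b` cut the families `f` and `g` at the same place. -/
def SameCut [LE α] [LE β] (f : ι → α) (g : ι → β) (a : α) (b : β) : Prop :=
  ∀ i, (a ≤ f i ↔ b ≤ g i) ∧ (f i ≤ a ↔ g i ≤ b)

variable {f : ι → α} {g : ι → β}

theorem SameOrder.symm [LE α] [LE β] (h : SameOrder f g) : SameOrder g f :=
  fun i j => (h i j).symm

theorem SameCut.symm [LE α] [LE β] {a : α} {b : β} (h : SameCut f g a b) : SameCut g f b a :=
  fun i => ⟨(h i).1.symm, (h i).2.symm⟩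

theorem SameOrder.optionElim [Preorder α] [Preorder β] {a : α} {b : β} (h : SameOrder f g)
    (hab : SameCut f g a b) :
    SameOrder (fun i : Option ι => i.elim a f) (fun i => i.elim b g) := by
  rintro (_ | i) (_ | j)
  exacts [iff_of_true le_rfl le_rfl, (hab j).1, (hab i).2, h i j]

theorem SameOrder.lt_iff_lt [LinearOrder α] [LinearOrder β] (h : SameOrder f g) (i j : ι) :
    f i < f j ↔ g i < g j := by
  simpa only [not_le] using (h j i).not

theorem SameOrder.exists_sameCut [Finite ι] [LinearOrder α] [LinearOrder β] [DenselyOrdered β]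
    [NoMinOrder β] [NoMaxOrder β] [Nonempty β] (h : SameOrder f g) (a : α) :
    ∃ b, SameCut f g a b := by
  by_cases ha : ∃ i, f i = a
  · obtain ⟨i, rfl⟩ := ha
    exact ⟨g i, fun j => ⟨h i j, h j i⟩⟩
  push Not at ha
  obtain ⟨b, hbelow, habove⟩ := Set.Finite.exists_between' (Set.toFinite (g '' {i | f i < a}))
    (Set.toFinite (g '' {i | a < f i})) (by
      rintro _ ⟨i, hi, rfl⟩ _ ⟨j, hj, rfl⟩
      exact (h.lt_iff_lt i j).1 (lt_trans hi hj))
  refine ⟨b, fun i => ?_⟩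
  rcases (ha i).lt_or_gt with hi | hi
  · have hgi : g i < b := hbelow _ ⟨i, hi, rfl⟩
    simp only [hi.not_ge, hgi.not_ge, hi.le, hgi.le, and_self]
  · have hgi : b < g i := habove _ ⟨i, hi, rfl⟩
    simp only [hi.not_ge, hgi.not_ge, hi.le, hgi.le, and_self]

end SameOrder

section Clocks

variable {C : Type} {k : C → ℕ} {u₁ u₂ : C → NNReal}

/-- The delay after which clock `x` reaches the value `n ≤ k x`; `none` stands for the
present moment, delay `0`. -/
def eventTime (k : C → ℕ) (u : C → NNReal) : Option (Σ x : C, Fin (k x + 1)) → ℝ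
  | none => 0
  | some ⟨x, n⟩ => (n : ℕ) - u x

theorem RegionEquiv.symm (h : RegionEquiv k u₁ u₂) : RegionEquiv k u₂ u₁ :=
  ⟨fun x n hn => ⟨(h.1 x n hn).1.symm, (h.1 x n hn).2.1.symm, (h.1 x n hn).2.2.symm⟩,
   fun x y hxy m h1 h2 =>
    ⟨(h.2 x y hxy m h1 h2).1.symm, (h.2 x y hxy m h1 h2).2.1.symm,
     (h.2 x y hxy m h1 h2).2.2.symm⟩⟩

theorem RegionEquiv.sub_cmp_iff (h : RegionEquiv k u₁ u₂) (x y : C) (n : ℕ) (hn : n ≤ k x) :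
    ((u₁ x : ℝ) - u₁ y < n ↔ (u₂ x : ℝ) - u₂ y < n) ∧
    ((u₁ x : ℝ) - u₁ y = n ↔ (u₂ x : ℝ) - u₂ y = n) ∧
    ((u₁ x : ℝ) - u₁ y > n ↔ (u₂ x : ℝ) - u₂ y > n) := by
  rcases eq_or_ne x y with rfl | hxy
  · simp
  · exact_mod_cast h.2 y x hxy.symm n (by omega) (by exact_mod_cast hn)

theorem RegionEquiv.sat_iff (h : RegionEquiv k u₁ u₂) {φ : CC C} (hφ : Bounded k φ) :
    sat u₁ φ ↔ sat u₂ φ := by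
  induction φ with
  | lt x n => exact (h.1 x n hφ).1
  | eq x n => exact (h.1 x n hφ).2.1
  | gt x n => exact (h.1 x n hφ).2.2
  | dlt x y n => exact (h.sub_cmp_iff x y n hφ).1
  | deq x y n => exact (h.sub_cmp_iff x y n hφ).2.1
  | dgt x y n => exact (h.sub_cmp_iff x y n hφ).2.2
  | and φ ψ ihφ ihψ => exact and_congr (ihφ hφ.1) (ihψ hφ.2)
  | or φ ψ ihφ ihψ => exact or_congr (ihφ hφ.1) (ihψ hφ.2)

theorem RegionEquiv.sameOrder_eventTime (h : RegionEquiv k u₁ u₂) :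
    SameOrder (eventTime k u₁) (eventTime k u₂) := by
  have rearrange : ∀ (n m : ℕ) (a b : ℝ), n - a ≤ m - b ↔ b - a ≤ ((m - n : ℤ) : ℝ) := by
    intro n m a b; push_cast; constructor <;> intro <;> linarith
  rintro (_ | ⟨x, n⟩) (_ | ⟨y, m⟩)
  · exact iff_of_true le_rfl le_rfl
  · simpa only [eventTime, sub_nonneg, not_lt] using (h.1 y m m.is_le).2.2.not
  · simpa only [eventTime, sub_nonpos, not_lt] using (h.1 x n n.is_le).1.not
  · simp only [eventTime]
    rcases eq_or_ne x y with rfl | hxy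
    · simp only [sub_le_sub_iff_right]
    · rw [rearrange, rearrange]
      simpa only [not_lt] using
        (h.2 x y hxy (m - n) (by have := n.is_le; omega) (by have := m.is_le; omega)).2.2.not

theorem RegionEquiv.shift_of_sameCut (h : RegionEquiv k u₁ u₂) {r s : NNReal}
    (hrs : SameCut (eventTime k u₁) (eventTime k u₂) r s) :
    RegionEquiv k (shift u₁ r) (shift u₂ s) := by
  refine ⟨fun x n hn => ?_, fun x y hxy m hx hy => ?_⟩
  · obtain ⟨hr_le, hle_r⟩ := hrs (some ⟨x, ⟨n, by omega⟩⟩)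
    simp only [eventTime, le_sub_iff_add_le', sub_le_iff_le_add'] at hr_le hle_r
    simp only [shift, NNReal.coe_add, gt_iff_lt, ← not_le, le_antisymm_iff, hr_le, hle_r, and_self]
  · simp only [shift, NNReal.coe_add, add_sub_add_right_eq_sub]
    exact h.2 x y hxy m hx hy

theorem RegionEquiv.exists_delay_imp [Finite C] (h : RegionEquiv k u₁ u₂) {φ₁ φ₂ : CC C}
    (h₁ : Bounded k φ₁) (h₂ : Bounded k φ₂) :
    (∃ Δ : NNReal, sat (shift u₁ Δ) φ₁ ∧ ∀ δ ≤ Δ, sat (shift u₁ δ) φ₂) →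
    (∃ Δ : NNReal, sat (shift u₂ Δ) φ₁ ∧ ∀ δ ≤ Δ, sat (shift u₂ δ) φ₂) := by
  rintro ⟨Δ, hΔ₁, hΔ₂⟩
  have hord := h.sameOrder_eventTime
  obtain ⟨Δ', hΔ'⟩ := hord.exists_sameCut (Δ : ℝ)
  have hΔ'₀ : 0 ≤ Δ' := (hΔ' none).2.1 Δ.coe_nonneg
  refine ⟨⟨Δ', hΔ'₀⟩, (h.shift_of_sameCut hΔ').sat_iff h₁ |>.1 hΔ₁, fun δ' hδ' => ?_⟩
  obtain ⟨δ, hδ⟩ := (hord.optionElim hΔ').symm.exists_sameCut (δ' : ℝ)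
  have hδ₀ : 0 ≤ δ := (hδ (some none)).2.1 δ'.coe_nonneg
  have hδΔ : δ ≤ Δ := (hδ none).1.1 hδ'
  have hδδ' : SameCut (eventTime k u₁) (eventTime k u₂) δ δ' :=
    SameCut.symm fun i => hδ (some i)
  exact (h.shift_of_sameCut (r := ⟨δ, hδ₀⟩) hδδ').sat_iff h₂ |>.1 (hΔ₂ _ hδΔ)

end Clocks

/-- Δ-time invariance: the predicate
  Φ(u) := ∃Δ, (u+Δ ⊨ φ₁) ∧ ∀δ ∈ [0,Δ], (u+δ ⊨ φ₂)
is invariant under extended-region equivalence, for G-clock constraints φ₁, φ₂. -/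
theorem delta_time_invariance {C : Type} [Fintype C] (k : C → ℕ) (φ₁ φ₂ : CC C)
    (h₁ : Bounded k φ₁) (h₂ : Bounded k φ₂)
    (u₁ u₂ : C → NNReal) (h : RegionEquiv k u₁ u₂) :
    (∃ Δ : NNReal, sat (shift u₁ Δ) φ₁ ∧ ∀ δ ≤ Δ, sat (shift u₁ δ) φ₂) ↔
    (∃ Δ : NNReal, sat (shift u₂ Δ) φ₁ ∧ ∀ δ ≤ Δ, sat (shift u₂ δ) φ₂) :=
  ⟨h.exists_delay_imp h₁ h₂, h.symm.exists_delay_imp h₁ h₂⟩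
end

section
/- Completeness of the nonblocking predicate: in the semantic graph of a TA G, if a marked state (a state (lm, um) with lm ∈ Lm) is reachable from state (l,u) by a path of j transitions, then u ⊨ Nʲ(l), where Nʲ is the j-th iterate of the nonblocking-predicate operator. -/
/-- An edge of a timed automaton. -/
structure Edge (C L A : Type) where
  src : L
  ev : A
  guard : CC C
  reset : Set C
  tgt : L

/-- A timed automaton over clock type C, location type L and event type A. -/
structure TA (C L A : Type) where
  edges : Set (Edge C L A)
  marked : Set L
  init : L
  inv : L → CC C

/-- One transition of the semantic graph: an event transition (guard satisfied, target
invariant satisfied after reset) or a time transition (invariant holds throughout the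
delay). The source state must satisfy its invariant. -/
def Step {C L A : Type} (G : TA C L A) (s : L × (C → NNReal)) :
    (A ⊕ NNReal) → (L × (C → NNReal)) → Prop
  | Sum.inl a, t =>
      sat s.2 (G.inv s.1) ∧ ∃ e ∈ G.edges, e.src = s.1 ∧ e.ev = a ∧ sat s.2 e.guard ∧
        t.1 = e.tgt ∧ t.2 = resetVal s.2 e.reset ∧ sat t.2 (G.inv e.tgt)
  | Sum.inr Δ, t =>
      t.1 = s.1 ∧ t.2 = shift s.2 Δ ∧ ∀ δ ≤ Δ, sat (shift s.2 δ) (G.inv s.1)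

/-- The semantic (set-valued) iterates of the nonblocking predicate:
`Nset G 0 l` contains the valuations of marked states at `l`; `Nset G (i+1) l` adds the
valuations from which an event transition or a time transition reaches `Nset G i`. -/
def Nset {C L A : Type} (G : TA C L A) : ℕ → L → Set (C → NNReal)
  | 0, l => {u | l ∈ G.marked ∧ sat u (G.inv l)}
  | i + 1, l =>
      Nset G i l ∪
      {u | ∃ e ∈ G.edges, e.src = l ∧ sat u e.guard ∧
            sat (resetVal u e.reset) (G.inv e.tgt) ∧ resetVal u e.reset ∈ Nset G i e.tgt} ∪
      {u | ∃ Δ : NNReal, shift u Δ ∈ Nset G i l ∧ ∀ δ ≤ Δ, sat (shift u δ) (G.inv l)}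

/-- `ReachIn G n s t`: state `t` is reachable from state `s` in exactly `n` transitions
of the semantic graph. -/
inductive ReachIn {C L A : Type} (G : TA C L A) :
    ℕ → (L × (C → NNReal)) → (L × (C → NNReal)) → Prop
  | refl (s) : ReachIn G 0 s s
  | step {n : ℕ} {s t u : L × (C → NNReal)} :
      (∃ a, Step G s a t) → ReachIn G n t u → ReachIn G (n + 1) s u

section Completeness

variable {C L A : Type} {G : TA C L A}

theorem Step.sat_inv_tgt {s t : L × (C → NNReal)} :
    ∀ {a : A ⊕ NNReal}, Step G s a t → sat t.2 (G.inv t.1)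
  | .inl _, ⟨_, _, _, _, _, _, ht₁, _, hinv⟩ => ht₁ ▸ hinv
  | .inr Δ, ⟨ht₁, ht₂, hinv⟩ => ht₁ ▸ ht₂ ▸ hinv Δ le_rfl

theorem Step.mem_Nset_succ {s t : L × (C → NNReal)} {n : ℕ} :
    ∀ {a : A ⊕ NNReal}, Step G s a t → t.2 ∈ Nset G n t.1 → s.2 ∈ Nset G (n + 1) s.1
  | .inl _, ⟨_, e, he, hsrc, _, hg, ht₁, ht₂, hinv⟩, ht =>
      .inl <| .inr ⟨e, he, hsrc, hg, ht₂ ▸ hinv, ht₁ ▸ ht₂ ▸ ht⟩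
  | .inr Δ, ⟨ht₁, ht₂, hinv⟩, ht => .inr ⟨Δ, ht₁ ▸ ht₂ ▸ ht, hinv⟩

theorem ReachIn.mem_Nset {n : ℕ} {s t : L × (C → NNReal)} (h : ReachIn G n s t)
    (ht : t.1 ∈ G.marked) (hs : sat s.2 (G.inv s.1)) : s.2 ∈ Nset G n s.1 := by
  induction h with
  | refl => exact ⟨ht, hs⟩
  | step hstep _ ih =>
    obtain ⟨_, hstep⟩ := hstep
    exact hstep.mem_Nset_succ (ih ht hstep.sat_inv_tgt)

end Completeness

/-- Completeness of the nonblocking predicate: if a marked state is reachable from the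
state (l,u) by a path of j transitions, then u ⊨ Nʲ(l). -/
theorem nonblocking_predicate_complete {C L A : Type} (G : TA C L A)
    (j : ℕ) (l : L) (u : C → NNReal) (lm : L) (um : C → NNReal)
    (hu : sat u (G.inv l)) (hreach : ReachIn G j (l, u) (lm, um)) (hm : lm ∈ G.marked) :
    u ∈ Nset G j l :=
  hreach.mem_Nset hm hu
end

section
/- Soundness of the nonblocking predicate: for any state (l,u) in the semantic graph of a TA G and any i, if u ⊨ Nⁱ(l), then some marked state is reachable from (l,u) in the semantic graph (by a path of at most i transitions). -/
def MarkedReachableWithin {C L A : Type} (G : TA C L A) (i : ℕ) (s : L × (C → NNReal)) : Prop :=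
  ∃ j ≤ i, ∃ t : L × (C → NNReal), ReachIn G j s t ∧ t.1 ∈ G.marked

namespace MarkedReachableWithin

variable {C L A : Type} {G : TA C L A} {i : ℕ}

theorem of_marked {s : L × (C → NNReal)} (hs : s.1 ∈ G.marked) : MarkedReachableWithin G 0 s :=
  ⟨0, le_rfl, s, ReachIn.refl s, hs⟩

theorem mono {k : ℕ} {s : L × (C → NNReal)} (hik : i ≤ k) (h : MarkedReachableWithin G i s) :
    MarkedReachableWithin G k s := by
  obtain ⟨j, hj, t, hst, ht⟩ := h
  exact ⟨j, hj.trans hik, t, hst, ht⟩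

theorem of_step {s t : L × (C → NNReal)} {a : A ⊕ NNReal} (hst : Step G s a t)
    (ht : MarkedReachableWithin G i t) : MarkedReachableWithin G (i + 1) s := by
  obtain ⟨j, hj, r, htr, hr⟩ := ht
  exact ⟨j + 1, Nat.succ_le_succ hj, r, ReachIn.step ⟨a, hst⟩ htr, hr⟩

end MarkedReachableWithin

section Step

variable {C L A : Type} {G : TA C L A} {l : L} {u : C → NNReal}

theorem Step.of_edge {e : Edge C L A} (he : e ∈ G.edges) (hsrc : e.src = l)
    (hu : sat u (G.inv l)) (hguard : sat u e.guard)
    (hinv : sat (resetVal u e.reset) (G.inv e.tgt)) :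
    Step G (l, u) (Sum.inl e.ev) (e.tgt, resetVal u e.reset) :=
  ⟨hu, e, he, hsrc, rfl, hguard, rfl, rfl, hinv⟩

theorem Step.of_delay {Δ : NNReal} (hinv : ∀ δ ≤ Δ, sat (shift u δ) (G.inv l)) :
    Step G (l, u) (Sum.inr Δ) (l, shift u Δ) :=
  ⟨rfl, rfl, hinv⟩

end Step

/-- Soundness of the nonblocking predicate: if u ⊨ Nⁱ(l) for the state (l,u), then a
marked state is reachable from (l,u) by a path of at most i transitions. -/
theorem nonblocking_predicate_sound {C L A : Type} (G : TA C L A)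
    (i : ℕ) (l : L) (u : C → NNReal) (hu : sat u (G.inv l)) (hN : u ∈ Nset G i l) :
    ∃ j ≤ i, ∃ t : L × (C → NNReal), ReachIn G j (l, u) t ∧ t.1 ∈ G.marked := by
  show MarkedReachableWithin G i (l, u)
  induction i generalizing l u with
  | zero => exact .of_marked hN.1
  | succ i ih =>
    rcases hN with (hN | ⟨e, he, hsrc, hguard, hinv, hN⟩) | ⟨Δ, hN, hdelay⟩
    · exact (ih l u hu hN).mono i.le_succ
    · exact .of_step (.of_edge he hsrc hu hguard hinv) (ih e.tgt _ hinv hN)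
    · exact .of_step (.of_delay hdelay) (ih l _ (hdelay Δ le_rfl) hN)
end

section
/- Monotone fixpoint characterization: the nonblocking predicates N(l) := ⋃ᵢ Nⁱ(l) (as sets of valuations) satisfy: u ∈ N(l) iff (l,u) is a nonblocking state of the semantic graph of G, i.e., iff a marked state is reachable from (l,u). -/
/-! On states satisfying their invariant, `Nset G (i+1)` is `Nset G i` together with the
one-step predecessors of `Nset G i` in the semantic graph, so `Nset G i l` consists of the
valuations from which a marked state is reachable in at most `i` transitions. Transitions
preserve invariants, which lets both inductions carry the invariant of the current state. -/

section Semantics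

variable {C L A : Type} (G : TA C L A)

def SemStep (s t : L × (C → NNReal)) : Prop := ∃ a, Step G s a t

variable {G}

theorem sat_inv_of_step {s t : L × (C → NNReal)} {a : A ⊕ NNReal} (h : Step G s a t) :
    sat t.2 (G.inv t.1) := by
  match a, h with
  | Sum.inl _, ⟨_, _, _, _, _, _, htgt, _, hinv⟩ => rwa [htgt]
  | Sum.inr Δ, ⟨hloc, hval, hdelay⟩ => rw [hloc, hval]; exact hdelay Δ le_rfl

theorem mem_Nset_succ_iff {i : ℕ} {l : L} {u : C → NNReal} (hu : sat u (G.inv l)) :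
    u ∈ Nset G (i + 1) l ↔ u ∈ Nset G i l ∨ ∃ t, SemStep G (l, u) t ∧ t.2 ∈ Nset G i t.1 := by
  constructor
  · rintro ((hi | ⟨e, he, hsrc, hguard, hinv, hmem⟩) | ⟨Δ, hmem, hdelay⟩)
    · exact .inl hi
    · exact .inr ⟨(e.tgt, resetVal u e.reset),
        ⟨.inl e.ev, hu, e, he, hsrc, rfl, hguard, rfl, rfl, hinv⟩, hmem⟩
    · exact .inr ⟨(l, shift u Δ), ⟨.inr Δ, rfl, rfl, hdelay⟩, hmem⟩
  · rintro (hi | ⟨t, ⟨a, hstep⟩, hmem⟩)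
    · exact .inl (.inl hi)
    · match a, hstep with
      | Sum.inl _, ⟨_, e, he, hsrc, _, hguard, htgt, hval, hinv⟩ =>
        rw [htgt, hval] at hmem
        rw [hval] at hinv
        exact .inl (.inr ⟨e, he, hsrc, hguard, hinv, hmem⟩)
      | Sum.inr Δ, ⟨hloc, hval, hdelay⟩ =>
        rw [hloc, hval] at hmem
        exact .inr ⟨Δ, hmem, hdelay⟩

theorem exists_reachable_marked_of_mem_Nset (i : ℕ) {l : L} {u : C → NNReal}
    (hu : sat u (G.inv l)) (hmem : u ∈ Nset G i l) :
    ∃ t, Relation.ReflTransGen (SemStep G) (l, u) t ∧ t.1 ∈ G.marked := by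
  induction i generalizing l u with
  | zero => exact ⟨(l, u), .refl, hmem.1⟩
  | succ i ih =>
    rcases (mem_Nset_succ_iff hu).1 hmem with hi | ⟨t, ⟨a, hstep⟩, ht⟩
    · exact ih hu hi
    · obtain ⟨m, hreach, hm⟩ := ih (sat_inv_of_step hstep) ht
      exact ⟨m, .head ⟨a, hstep⟩ hreach, hm⟩

theorem exists_mem_Nset_of_reachable_marked {s t : L × (C → NNReal)}
    (hreach : Relation.ReflTransGen (SemStep G) s t) (ht : t.1 ∈ G.marked)
    (hs : sat s.2 (G.inv s.1)) : ∃ i, s.2 ∈ Nset G i s.1 := by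
  induction hreach using Relation.ReflTransGen.head_induction_on with
  | refl => exact ⟨0, ht, hs⟩
  | head hstep _ ih =>
    obtain ⟨_, hstep'⟩ := hstep
    obtain ⟨i, hi⟩ := ih (sat_inv_of_step hstep')
    exact ⟨i + 1, (mem_Nset_succ_iff hs).2 (.inr ⟨_, ⟨_, hstep'⟩, hi⟩)⟩

end Semantics

/-- Fixpoint characterization: u ∈ ⋃ᵢ Nⁱ(l) iff the state (l,u) is nonblocking,
i.e. some marked state is reachable from it in the semantic graph. -/
theorem nonblocking_predicate_characterization {C L A : Type} (G : TA C L A)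
    (l : L) (u : C → NNReal) (hu : sat u (G.inv l)) :
    (∃ i : ℕ, u ∈ Nset G i l) ↔
      ∃ t : L × (C → NNReal),
        Relation.ReflTransGen (fun s t => ∃ a, Step G s a t) (l, u) t ∧ t.1 ∈ G.marked :=
  ⟨fun ⟨i, hi⟩ => exists_reachable_marked_of_mem_Nset i hu hi,
    fun ⟨_, hreach, ht⟩ => exists_mem_Nset_of_reachable_marked hreach ht hu⟩
end
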